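/- arXiv:2010.01446 — 4 statements merged into one kernel-verified Lean document; each statement's English description precedes it below -/
import Mathlib

section
/- Let g : ℝⁿ → ℝ be convex and differentiable with an L-Lipschitz gradient (L > 0), let D : ℝⁿ → ℝⁿ be nonexpansive, and let τ > 0. Then the RED operator G := ∇g + τ(Id − D) is 1/(L+2τ)-cocoercive, i.e., ⟨G(x) − G(y), x − y⟩ ≥ (1/(L+2τ))·‖G(x) − G(y)‖² for all x, y ∈ ℝⁿ. -/
open scoped RealInnerProductSpace

section Aux

variable {n : ℕ}

lemma line_hasDerivAt (g : EuclideanSpace ℝ (Fin n) → ℝ) (hg : Differentiable ℝ g)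
    (x v : EuclideanSpace ℝ (Fin n)) (t : ℝ) :
    HasDerivAt (fun s : ℝ => g (x + s • v)) ⟪gradient g (x + t • v), v⟫ t := by
  have hcurve : HasDerivAt (fun s : ℝ => x + s • v) v t := by
    simpa using ((hasDerivAt_id t).smul_const v).const_add x
  have hf : HasFDerivAt g ((InnerProductSpace.toDual ℝ _) (gradient g (x + t • v))) (x + t • v) :=
    hasGradientAt_iff_hasFDerivAt.mp (hg _).hasGradientAt
  have := hf.comp_hasDerivAt t hcurve
  rw [InnerProductSpace.toDual_apply_apply] at this
  exact this

lemma first_order (g : EuclideanSpace ℝ (Fin n) → ℝ) (hconv : ConvexOn ℝ Set.univ g)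
    (hg : Differentiable ℝ g) (x z : EuclideanSpace ℝ (Fin n)) :
    g x + ⟪gradient g x, z - x⟫ ≤ g z := by
  have hφc : ConvexOn ℝ Set.univ (fun t : ℝ => g (x + t • (z - x))) := by
    have h := hconv.comp_affineMap (AffineMap.lineMap x z)
    have he : (fun t : ℝ => g (x + t • (z - x))) = g ∘ (AffineMap.lineMap x z) := by
      funext t
      simp [AffineMap.lineMap_apply, add_comm]
    rw [he]
    simpa using h
  have hd : HasDerivAt (fun t : ℝ => g (x + t • (z - x))) ⟪gradient g x, z - x⟫ 0 := by
    have := line_hasDerivAt g hg x (z - x) 0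
    simpa using this
  have := hφc.le_slope_of_hasDerivAt (Set.mem_univ 0) (Set.mem_univ 1) one_pos hd
  rw [slope_def_field] at this
  simp only [one_smul, zero_smul, add_zero] at this ⊢
  have hx1 : x + (z - x) = z := by abel
  rw [hx1] at this
  linarith [this]

lemma descent (L : ℝ) (hL : 0 < L) (g : EuclideanSpace ℝ (Fin n) → ℝ)
    (hg : Differentiable ℝ g)
    (hlip : ∀ x y, ‖gradient g x - gradient g y‖ ≤ L * ‖x - y‖)
    (x y : EuclideanSpace ℝ (Fin n)) :
    g y ≤ g x + ⟪gradient g x, y - x⟫ + L / 2 * ‖y - x‖ ^ 2 := by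
  set v := y - x with hv
  have hcont : Continuous (gradient g) := by
    have : LipschitzWith (Real.toNNReal L) (gradient g) := by
      apply LipschitzWith.of_dist_le_mul
      intro a b
      rw [dist_eq_norm, dist_eq_norm]
      simpa [Real.coe_toNNReal L hL.le] using hlip a b
    exact this.continuous
  have hcont1 : Continuous fun t : ℝ => ⟪gradient g (x + t • v), v⟫ := by
    exact (hcont.comp (by continuity)).inner continuous_const
  have hFTC : ∫ t in (0:ℝ)..1, ⟪gradient g (x + t • v), v⟫ = g y - g x := by
    have h := intervalIntegral.integral_eq_sub_of_hasDerivAt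
      (f := fun s : ℝ => g (x + s • v))
      (fun t _ => line_hasDerivAt g hg x v t)
      (hcont1.intervalIntegrable 0 1)
    simp only [one_smul, zero_smul, add_zero] at h
    have h1' : x + v = y := by rw [hv]; abel
    rw [h1'] at h
    exact h
  have hbound : ∀ t ∈ Set.Icc (0:ℝ) 1,
      ⟪gradient g (x + t • v), v⟫ ≤ ⟪gradient g x, v⟫ + L * ‖v‖ ^ 2 * t := by
    intro t ht
    have h1 : ⟪gradient g (x + t • v) - gradient g x, v⟫
        ≤ ‖gradient g (x + t • v) - gradient g x‖ * ‖v‖ := real_inner_le_norm _ _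
    have h2 : ‖gradient g (x + t • v) - gradient g x‖ ≤ L * (t * ‖v‖) := by
      have h := hlip (x + t • v) x
      have he : x + t • v - x = t • v := by abel
      rw [he, norm_smul] at h
      simpa [abs_of_nonneg ht.1] using h
    have h3 : ⟪gradient g (x + t • v) - gradient g x, v⟫
        = ⟪gradient g (x + t • v), v⟫ - ⟪gradient g x, v⟫ := inner_sub_left _ _ _
    nlinarith [mul_le_mul_of_nonneg_right h2 (norm_nonneg v), norm_nonneg v, sq_abs ‖v‖,
      pow_two ‖v‖]
  have hIntL : IntervalIntegrable (fun t : ℝ => L * ‖v‖ ^ 2 * t) MeasureTheory.volume 0 1 := by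
    apply Continuous.intervalIntegrable
    continuity
  have hIntS : IntervalIntegrable (fun t : ℝ => ⟪gradient g x, v⟫ + L * ‖v‖ ^ 2 * t)
      MeasureTheory.volume 0 1 := by
    apply Continuous.intervalIntegrable
    continuity
  have hint2 : ∫ t in (0:ℝ)..1, (⟪gradient g x, v⟫ + L * ‖v‖ ^ 2 * t)
      = ⟪gradient g x, v⟫ + L / 2 * ‖v‖ ^ 2 := by
    rw [intervalIntegral.integral_add (intervalIntegrable_const) hIntL,
      intervalIntegral.integral_const_mul, intervalIntegral.integral_const, integral_id]
    simp only [sub_zero, one_smul, smul_eq_mul]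
    ring
  have hmono := intervalIntegral.integral_mono_on (a := (0:ℝ)) (b := 1) zero_le_one
    (hcont1.intervalIntegrable 0 1) hIntS hbound
  rw [hFTC, hint2] at hmono
  linarith

lemma bh_lower (L : ℝ) (hL : 0 < L) (g : EuclideanSpace ℝ (Fin n) → ℝ)
    (hconv : ConvexOn ℝ Set.univ g) (hg : Differentiable ℝ g)
    (hlip : ∀ x y, ‖gradient g x - gradient g y‖ ≤ L * ‖x - y‖)
    (x y : EuclideanSpace ℝ (Fin n)) :
    g x + ⟪gradient g x, y - x⟫ + 1 / (2 * L) * ‖gradient g y - gradient g x‖ ^ 2 ≤ g y := by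
  set u := gradient g y - gradient g x with hu
  set z := y - (1 / L) • u with hz
  have h1 : g x + ⟪gradient g x, z - x⟫ ≤ g z := first_order g hconv hg x z
  have h2 : g z ≤ g y + ⟪gradient g y, z - y⟫ + L / 2 * ‖z - y‖ ^ 2 :=
    descent L hL g hg hlip y z
  have hzy : z - y = -((1 / L) • u) := by rw [hz]; abel
  have e1 : ⟪gradient g y, z - y⟫ = -(1 / L) * ⟪gradient g y, u⟫ := by
    rw [hzy, inner_neg_right, real_inner_smul_right]; ring
  have e2 : ‖z - y‖ ^ 2 = (1 / L) ^ 2 * ‖u‖ ^ 2 := by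
    rw [hzy, norm_neg, norm_smul, Real.norm_eq_abs,
      abs_of_pos (by positivity : (0:ℝ) < 1 / L), mul_pow]
  have e3 : ⟪gradient g x, z - x⟫ = ⟪gradient g x, y - x⟫ - (1 / L) * ⟪gradient g x, u⟫ := by
    have : z - x = (y - x) - (1 / L) • u := by rw [hz]; abel
    rw [this, inner_sub_right, real_inner_smul_right]
  have e4 : ⟪gradient g y, u⟫ - ⟪gradient g x, u⟫ = ‖u‖ ^ 2 := by
    rw [← inner_sub_left, ← hu, real_inner_self_eq_norm_sq]
  have hLne : L ≠ 0 := ne_of_gt hL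
  rw [e1, e2] at h2
  rw [e3] at h1
  have key : g x + ⟪gradient g x, y - x⟫ - (1 / L) * ⟪gradient g x, u⟫
      ≤ g y + (-(1 / L) * ⟪gradient g y, u⟫) + L / 2 * ((1 / L) ^ 2 * ‖u‖ ^ 2) := by
    linarith
  have hfield : L / 2 * ((1 / L) ^ 2 * ‖u‖ ^ 2) = 1 / (2 * L) * ‖u‖ ^ 2 := by
    field_simp
  have hinner : (1 / L) * ⟪gradient g y, u⟫ - (1 / L) * ⟪gradient g x, u⟫
      = (1 / L) * ‖u‖ ^ 2 := by rw [← mul_sub, e4]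
  rw [hfield] at key
  have h1L : 1 / L * ‖u‖ ^ 2 - 1 / (2 * L) * ‖u‖ ^ 2 = 1 / (2 * L) * ‖u‖ ^ 2 := by
    field_simp; ring
  linarith

lemma bh_cocoercive (L : ℝ) (hL : 0 < L) (g : EuclideanSpace ℝ (Fin n) → ℝ)
    (hconv : ConvexOn ℝ Set.univ g) (hg : Differentiable ℝ g)
    (hlip : ∀ x y, ‖gradient g x - gradient g y‖ ≤ L * ‖x - y‖)
    (x y : EuclideanSpace ℝ (Fin n)) :
    (1 / L) * ‖gradient g x - gradient g y‖ ^ 2 ≤ ⟪gradient g x - gradient g y, x - y⟫ := by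
  have h1 := bh_lower L hL g hconv hg hlip x y
  have h2 := bh_lower L hL g hconv hg hlip y x
  have e1 : ⟪gradient g x - gradient g y, x - y⟫
      = ⟪gradient g x, x - y⟫ - ⟪gradient g y, x - y⟫ := inner_sub_left _ _ _
  have e2 : ⟪gradient g y, y - x⟫ = -⟪gradient g y, x - y⟫ := by
    rw [show y - x = -(x - y) by abel, inner_neg_right]
  have e3 : ⟪gradient g x, y - x⟫ = -⟪gradient g x, x - y⟫ := by
    rw [show y - x = -(x - y) by abel, inner_neg_right]
  have e4 : ‖gradient g x - gradient g y‖ = ‖gradient g y - gradient g x‖ := norm_sub_rev _ _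
  rw [e3] at h1
  have e4sq : ‖gradient g x - gradient g y‖ ^ 2 = ‖gradient g y - gradient g x‖ ^ 2 := by
    rw [e4]
  rw [e4sq] at h2
  have hsum : 1 / (2 * L) * ‖gradient g y - gradient g x‖ ^ 2
      + 1 / (2 * L) * ‖gradient g y - gradient g x‖ ^ 2
      = 1 / L * ‖gradient g y - gradient g x‖ ^ 2 := by
    field_simp
    ring
  rw [e1, e4sq]
  linarith [h1, h2, hsum]

lemma combine_ineq (L τ a b c : ℝ) (hL : 0 < L) (hτ : 0 < τ)
    (ha : 0 ≤ a) (hb : 0 ≤ b) (hc0 : 0 ≤ c) (hc : c ≤ a + b) :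
    (1 / (L + 2 * τ)) * c ^ 2 ≤ (1 / L) * a ^ 2 + (1 / (2 * τ)) * b ^ 2 := by
  have hL2τ : (0:ℝ) < L + 2 * τ := by positivity
  have e : (1 / L) * a ^ 2 + (1 / (2 * τ)) * b ^ 2 - (1 / (L + 2 * τ)) * (a + b) ^ 2
      = ((2 * τ * a - L * b) ^ 2) / (L * (2 * τ) * (L + 2 * τ)) := by
    field_simp
    ring
  have hpos : (0:ℝ) ≤ ((2 * τ * a - L * b) ^ 2) / (L * (2 * τ) * (L + 2 * τ)) := by positivity
  have hcc : c ^ 2 ≤ (a + b) ^ 2 := by nlinarith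
  have h2 : (1 / (L + 2 * τ)) * c ^ 2 ≤ (1 / (L + 2 * τ)) * (a + b) ^ 2 :=
    mul_le_mul_of_nonneg_left hcc (by positivity)
  linarith

end Aux

set_option maxHeartbeats 1000000 in
/-- The RED operator `G = ∇g + τ(Id − D)` is `1/(L+2τ)`-cocoercive when `g` is convex
and differentiable with `L`-Lipschitz gradient and `D` is nonexpansive. -/
theorem red_operator_cocoercive
    {n : ℕ} (L τ : ℝ) (hL : 0 < L) (hτ : 0 < τ)
    (g : EuclideanSpace ℝ (Fin n) → ℝ)
    (hg_conv : ConvexOn ℝ Set.univ g)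
    (hg_diff : Differentiable ℝ g)
    (hg_lip : ∀ x y, ‖gradient g x - gradient g y‖ ≤ L * ‖x - y‖)
    (D : EuclideanSpace ℝ (Fin n) → EuclideanSpace ℝ (Fin n))
    (hD : ∀ x y, ‖D x - D y‖ ≤ ‖x - y‖)
    (G : EuclideanSpace ℝ (Fin n) → EuclideanSpace ℝ (Fin n))
    (hG : ∀ x, G x = gradient g x + τ • (x - D x)) :
    ∀ x y, (1 / (L + 2 * τ)) * ‖G x - G y‖ ^ 2 ≤ ⟪G x - G y, x - y⟫ := by
  intro x y
  set u := gradient g x - gradient g y with hu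
  set v := τ • ((x - D x) - (y - D y)) with hv
  set w := x - y with hw
  have hGxy : G x - G y = u + v := by
    rw [hG x, hG y, hu, hv]
    module
  -- cocoercivity of the gradient part
  have hgrad : (1 / L) * ‖u‖ ^ 2 ≤ ⟪u, w⟫ :=
    bh_cocoercive L hL g hg_conv hg_diff hg_lip x y
  -- cocoercivity of Id - D scaled by τ
  have hIdD : (1 / (2 * τ)) * ‖v‖ ^ 2 ≤ ⟪v, w⟫ := by
    set d := D x - D y with hd
    have hdd : ‖d‖ ≤ ‖w‖ := hD x y
    have hvw : (x - D x) - (y - D y) = w - d := by rw [hw, hd]; abel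
    have hv' : v = τ • (w - d) := by rw [hv, hvw]
    have e1 : ⟪v, w⟫ = τ * (‖w‖ ^ 2 - ⟪d, w⟫) := by
      rw [hv', real_inner_smul_left, inner_sub_left, real_inner_self_eq_norm_sq]
    have e2 : ‖v‖ ^ 2 = τ ^ 2 * ‖w - d‖ ^ 2 := by
      rw [hv', norm_smul]
      simp [abs_of_nonneg hτ.le]
      ring
    have e3 : ‖w - d‖ ^ 2 = ‖w‖ ^ 2 - 2 * ⟪w, d⟫ + ‖d‖ ^ 2 := by
      rw [← real_inner_self_eq_norm_sq, inner_sub_sub_self, real_inner_self_eq_norm_sq,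
        real_inner_self_eq_norm_sq, real_inner_comm d w]
      ring
    have e4 : ⟪w, d⟫ = ⟪d, w⟫ := real_inner_comm _ _
    rw [e1, e2, e3, e4]
    have h5 : (1 / (2 * τ)) * (τ ^ 2 * (‖w‖ ^ 2 - 2 * ⟪d, w⟫ + ‖d‖ ^ 2))
        = (τ / 2) * (‖w‖ ^ 2 - 2 * ⟪d, w⟫ + ‖d‖ ^ 2) := by field_simp
    rw [h5]
    have h6 : ‖d‖ ^ 2 ≤ ‖w‖ ^ 2 := by nlinarith [norm_nonneg d, norm_nonneg w, hdd]
    nlinarith [h6, hτ.le, mul_nonneg hτ.le (sub_nonneg.mpr h6)]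
  -- combine
  have hsum : (1 / L) * ‖u‖ ^ 2 + (1 / (2 * τ)) * ‖v‖ ^ 2 ≤ ⟪u + v, w⟫ := by
    rw [inner_add_left]
    linarith
  have hfinal : (1 / (L + 2 * τ)) * ‖u + v‖ ^ 2
      ≤ (1 / L) * ‖u‖ ^ 2 + (1 / (2 * τ)) * ‖v‖ ^ 2 :=
    combine_ineq L τ ‖u‖ ‖v‖ ‖u + v‖ hL hτ (norm_nonneg u) (norm_nonneg v)
      (norm_nonneg (u + v)) (norm_add_le u v)
  rw [hGxy]
  calc (1 / (L + 2 * τ)) * ‖u + v‖ ^ 2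
      ≤ (1 / L) * ‖u‖ ^ 2 + (1 / (2 * τ)) * ‖v‖ ^ 2 := hfinal
    _ ≤ ⟪u + v, w⟫ := hsum
end

section
/- (Baillon–Haddad type equivalence.) Let f : ℝⁿ → ℝ be convex and continuously differentiable, and let L > 0. Then ∇f is Lipschitz continuous with constant L if and only if ∇f is (1/L)-cocoercive, i.e., ⟨∇f(x) − ∇f(y), x − y⟩ ≥ (1/L)‖∇f(x) − ∇f(y)‖² for all x, y ∈ ℝⁿ. -/
open scoped RealInnerProductSpace
open intervalIntegral

section BHaux

variable {F : Type*} [NormedAddCommGroup F] [InnerProductSpace ℝ F] [CompleteSpace F]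

lemma bh_hasDerivAt (f : F → ℝ) (hf : ContDiff ℝ 1 f) (x y : F) (t : ℝ) :
    HasDerivAt (fun s : ℝ => f (AffineMap.lineMap x y s))
      ⟪gradient f (AffineMap.lineMap x y t), y - x⟫ t := by
  have hc : HasDerivAt (fun s : ℝ => (AffineMap.lineMap x y s : F)) (y - x) t := by
    simp only [AffineMap.lineMap_apply_module']
    simpa using ((hasDerivAt_id t).smul_const (y - x)).add_const x
  have hd : HasGradientAt f (gradient f (AffineMap.lineMap x y t)) (AffineMap.lineMap x y t) :=
    ((hf.differentiable one_ne_zero) _).hasGradientAt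
  have := (hasGradientAt_iff_hasFDerivAt.1 hd).comp_hasDerivAt t hc
  simpa [InnerProductSpace.toDual_apply_apply, Function.comp_def] using this

lemma bh_cont_grad (f : F → ℝ) (hf : ContDiff ℝ 1 f) : Continuous (gradient f) := by
  have : Continuous (fderiv ℝ f) := hf.continuous_fderiv one_ne_zero
  exact (InnerProductSpace.toDual ℝ F).symm.continuous.comp this

lemma bh_convex_lower (f : F → ℝ) (hconv : ConvexOn ℝ Set.univ f) (hf : ContDiff ℝ 1 f)
    (x y : F) : f x + ⟪gradient f x, y - x⟫ ≤ f y := by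
  have hg : ConvexOn ℝ Set.univ (fun s : ℝ => f (AffineMap.lineMap x y s)) := by
    have := hconv.comp_affineMap (AffineMap.lineMap x y)
    simpa [Set.preimage_univ, Function.comp_def] using this
  have hd := bh_hasDerivAt f hf x y 0
  have h0 : (AffineMap.lineMap x y : ℝ →ᵃ[ℝ] F) 0 = x := by simp
  rw [h0] at hd
  have := hg.le_slope_of_hasDerivAt (Set.mem_univ (0:ℝ)) (Set.mem_univ (1:ℝ))
    one_pos hd
  simp only [slope_def_field, div_one, AffineMap.lineMap_apply_zero,
    AffineMap.lineMap_apply_one, sub_zero] at this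
  linarith

lemma bh_descent (f : F → ℝ) (hf : ContDiff ℝ 1 f) (L : ℝ) (hL : 0 < L)
    (hlip : ∀ a b, ‖gradient f a - gradient f b‖ ≤ L * ‖a - b‖) (x y : F) :
    f y ≤ f x + ⟪gradient f x, y - x⟫ + L / 2 * ‖y - x‖ ^ 2 := by
  set c := fun t : ℝ => (AffineMap.lineMap x y : ℝ →ᵃ[ℝ] F) t with hc
  set d := fun t : ℝ => ⟪gradient f (c t), y - x⟫ with hdd
  have hd : ∀ t, HasDerivAt (fun s => f (c s)) (d t) t := bh_hasDerivAt f hf x y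
  have hcont : Continuous d := by
    exact Continuous.inner ((bh_cont_grad f hf).comp (AffineMap.lineMap_continuous))
      continuous_const
  have hc0 : c 0 = x := by simp [hc]
  have hc1 : c 1 = y := by simp [hc]
  have hint : f y - f x = ∫ t in (0:ℝ)..1, d t := by
    have := intervalIntegral.integral_eq_sub_of_hasDerivAt
      (f := fun s => f (c s)) (fun t _ => hd t) (hcont.intervalIntegrable 0 1)
    rw [this]; simp [hc0, hc1]
  have hbound : ∀ t ∈ Set.Icc (0:ℝ) 1, d t ≤ d 0 + (L * ‖y - x‖ ^ 2) * t := by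
    intro t ht
    have h1 : d t - d 0 = ⟪gradient f (c t) - gradient f x, y - x⟫ := by
      simp [hdd, hc0, inner_sub_left]
    have h2 := real_inner_le_norm (gradient f (c t) - gradient f x) (y - x)
    have h3 : ‖gradient f (c t) - gradient f x‖ ≤ L * (t * ‖y - x‖) := by
      have hl := hlip (c t) x
      have hct : c t - x = t • (y - x) := by
        simp [hc, AffineMap.lineMap_apply_module']
      rw [hct, norm_smul, Real.norm_eq_abs, abs_of_nonneg ht.1, ← mul_assoc] at hl
      linarith [hl]
    have h4 := mul_le_mul_of_nonneg_right h3 (norm_nonneg (y - x))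
    nlinarith [h1, h2, h4]
  have hIrhs : (∫ t in (0:ℝ)..1, (d 0 + (L * ‖y - x‖ ^ 2) * t))
      = d 0 + L / 2 * ‖y - x‖ ^ 2 := by
    rw [intervalIntegral.integral_add (continuous_const.intervalIntegrable 0 1)
      ((show Continuous fun t : ℝ => L * ‖y - x‖ ^ 2 * t from continuous_const.mul continuous_id').intervalIntegrable 0 1),
      intervalIntegral.integral_const, intervalIntegral.integral_const_mul,
      integral_id]
    simp; ring
  have hmono := intervalIntegral.integral_mono_on (μ := MeasureTheory.volume) zero_le_one
    (hcont.intervalIntegrable 0 1)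
    ((show Continuous fun t : ℝ => d 0 + L * ‖y - x‖ ^ 2 * t from continuous_const.add (continuous_const.mul continuous_id')).intervalIntegrable 0 1)
    hbound
  rw [hIrhs] at hmono
  have hd0 : d 0 = ⟪gradient f x, y - x⟫ := by simp [hdd, hc0]
  rw [← hint, hd0] at hmono
  linarith

lemma bh_key (f : F → ℝ) (hconv : ConvexOn ℝ Set.univ f) (hf : ContDiff ℝ 1 f)
    (L : ℝ) (hL : 0 < L) (hlip : ∀ a b, ‖gradient f a - gradient f b‖ ≤ L * ‖a - b‖)
    (x y : F) :
    f x + ⟪gradient f x, y - x⟫ + 1 / (2 * L) * ‖gradient f y - gradient f x‖ ^ 2 ≤ f y := by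
  set g := gradient f y - gradient f x with hg
  set z := y - (1 / L) • g with hz
  have h1 := bh_convex_lower f hconv hf x z
  have h2 := bh_descent f hf L hL hlip y z
  have e1 : z - y = -((1 / L) • g) := by rw [hz]; abel
  have e2 : z - x = (y - x) - (1 / L) • g := by rw [hz]; abel
  have e3 : ⟪gradient f y, z - y⟫ = -(1 / L * ⟪gradient f y, g⟫) := by
    rw [e1, inner_neg_right, real_inner_smul_right]
  have e4 : ‖z - y‖ ^ 2 = (1 / L) ^ 2 * ‖g‖ ^ 2 := by
    rw [e1, norm_neg, norm_smul, mul_pow, Real.norm_eq_abs, sq_abs]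
  have e5 : ⟪gradient f x, z - x⟫
      = ⟪gradient f x, y - x⟫ - 1 / L * ⟪gradient f x, g⟫ := by
    rw [e2, inner_sub_right, real_inner_smul_right]
  have e6 : ⟪gradient f y, g⟫ - ⟪gradient f x, g⟫ = ‖g‖ ^ 2 := by
    rw [← inner_sub_left, ← hg, real_inner_self_eq_norm_sq]
  have hLu : L * (1 / L) = 1 := mul_one_div_cancel hL.ne'
  rw [e3, e4] at h2
  rw [e5] at h1
  have e7 : L / 2 * ((1 / L) ^ 2 * ‖g‖ ^ 2) = 1 / (2 * L) * ‖g‖ ^ 2 := by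
    field_simp
  have e8 : 1 / L * ⟪gradient f y, g⟫ - 1 / L * ⟪gradient f x, g⟫
      = 1 / L * ‖g‖ ^ 2 := by rw [← mul_sub, e6]
  have e9 : 1 / L * ‖g‖ ^ 2 - 1 / (2 * L) * ‖g‖ ^ 2 = 1 / (2 * L) * ‖g‖ ^ 2 := by
    field_simp; ring
  linarith [h1, h2, e7, e8, e9]


end BHaux

/-- Baillon–Haddad type equivalence: for a convex continuously differentiable `f`,
the gradient `∇f` is `L`-Lipschitz iff it is `1/L`-cocoercive. -/
theorem gradient_lipschitz_iff_cocoercive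
    {n : ℕ} (L : ℝ) (hL : 0 < L)
    (f : EuclideanSpace ℝ (Fin n) → ℝ)
    (hf_conv : ConvexOn ℝ Set.univ f)
    (hf_diff : ContDiff ℝ 1 f) :
    (∀ x y, ‖gradient f x - gradient f y‖ ≤ L * ‖x - y‖) ↔
      (∀ x y, (1 / L) * ‖gradient f x - gradient f y‖ ^ 2 ≤
        ⟪gradient f x - gradient f y, x - y⟫) := by
  constructor
  · intro hlip x y
    have k1 := bh_key f hf_conv hf_diff L hL hlip x y
    have k2 := bh_key f hf_conv hf_diff L hL hlip y x
    have e1 : ⟪gradient f x, y - x⟫ + ⟪gradient f y, x - y⟫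
        = -⟪gradient f x - gradient f y, x - y⟫ := by
      rw [inner_sub_left]
      have : (y - x : EuclideanSpace ℝ (Fin n)) = -(x - y) := by abel
      rw [this, inner_neg_right]
      ring
    have e2 : ‖gradient f y - gradient f x‖ = ‖gradient f x - gradient f y‖ :=
      norm_sub_rev _ _
    have e3 : 1 / (2 * L) * ‖gradient f x - gradient f y‖ ^ 2
        + 1 / (2 * L) * ‖gradient f x - gradient f y‖ ^ 2
        = 1 / L * ‖gradient f x - gradient f y‖ ^ 2 := by
      rw [← add_mul]; congr 1; rw [← add_div, one_add_one_eq_two]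
      rw [mul_comm, ← div_div, div_right_comm]
      norm_num
    rw [e2] at k1
    linarith [k1, k2, e3]
  · intro hco x y
    have hc := hco x y
    have cs := real_inner_le_norm (gradient f x - gradient f y) (x - y)
    rcases eq_or_lt_of_le (norm_nonneg (gradient f x - gradient f y)) with h0 | h0
    · rw [← h0]
      positivity
    · have h5 : ‖gradient f x - gradient f y‖ ^ 2
          ≤ L * (‖gradient f x - gradient f y‖ * ‖x - y‖) := by
        have := mul_le_mul_of_nonneg_left (le_trans hc cs) hL.le
        rwa [← mul_assoc, mul_one_div_cancel hL.ne', one_mul] at this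
      nlinarith [h5, h0]
end

section
/- Let g : ℝⁿ → ℝ be convex and differentiable with an L-Lipschitz gradient (L > 0), let D : ℝⁿ → ℝⁿ be nonexpansive, and let τ > 0, and set G := ∇g + τ(Id − D). Then for every step size γ with 0 < γ ≤ 2/(L+2τ), the operator Id − γG is nonexpansive. -/
open scoped RealInnerProductSpace

section RedAux

variable {F : Type*} [NormedAddCommGroup F] [InnerProductSpace ℝ F] [CompleteSpace F]

lemma red_aux_hasDerivAt {g : F → ℝ} (hg : Differentiable ℝ g) (x v : F) (t : ℝ) :
    HasDerivAt (fun s : ℝ => g (x + s • v)) ⟪gradient g (x + t • v), v⟫ t := by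
  have hc : HasDerivAt (fun s : ℝ => x + s • v) v t := by
    simpa using ((hasDerivAt_id t).smul_const v).const_add x
  have hgd := (hg (x + t • v)).hasGradientAt
  have := hgd.hasFDerivAt.comp_hasDerivAt t hc
  simpa [InnerProductSpace.toDual_apply_apply, Function.comp_def] using this


lemma red_aux_convex_ineq {g : F → ℝ} (hconv : ConvexOn ℝ Set.univ g)
    (hg : Differentiable ℝ g) (x y : F) :
    g x + ⟪gradient g x, y - x⟫ ≤ g y := by
  set v := y - x with hv
  have hφ : ConvexOn ℝ Set.univ (fun t : ℝ => g (x + t • v)) := by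
    have h := hconv.comp_affineMap (AffineMap.lineMap x y : ℝ →ᵃ[ℝ] F)
    have heq : (g ∘ (AffineMap.lineMap x y : ℝ →ᵃ[ℝ] F)) = fun t : ℝ => g (x + t • v) := by
      funext t
      simp [AffineMap.lineMap_apply, hv, add_comm]
    simpa [heq] using h
  have hd0 := red_aux_hasDerivAt hg x v 0
  have hd0' : HasDerivAt (fun t : ℝ => g (x + t • v)) ⟪gradient g x, v⟫ 0 := by
    simpa using hd0
  have hslope := hφ.le_slope_of_hasDerivAt (Set.mem_univ (0:ℝ)) (Set.mem_univ (1:ℝ))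
    one_pos hd0'
  rw [slope_def_field] at hslope
  simp only [one_smul, zero_smul, add_zero, sub_zero, div_one] at hslope
  have hxy : x + v = y := by rw [hv]; abel
  rw [hxy] at hslope
  linarith

lemma red_aux_descent {g : F → ℝ} (hg : Differentiable ℝ g) {L : ℝ} (hL : 0 < L)
    (hlip : ∀ a b, ‖gradient g a - gradient g b‖ ≤ L * ‖a - b‖) (x y : F) :
    g y ≤ g x + ⟪gradient g x, y - x⟫ + L / 2 * ‖y - x‖ ^ 2 := by
  set v := y - x with hv
  have hder : ∀ t : ℝ, HasDerivAt (fun s : ℝ => g (x + s • v)) ⟪gradient g (x + t • v), v⟫ t :=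
    fun t => red_aux_hasDerivAt hg x v t
  have hcontgrad : Continuous (gradient g) := by
    have hlw : LipschitzWith (Real.toNNReal L) (gradient g) := by
      apply LipschitzWith.of_dist_le_mul
      intro a b
      rw [dist_eq_norm, dist_eq_norm, Real.coe_toNNReal _ hL.le]
      exact hlip a b
    exact hlw.continuous
  have hcont : Continuous fun t : ℝ => ⟪gradient g (x + t • v), v⟫ :=
    (hcontgrad.comp (by continuity)).inner continuous_const
  have hFTC : ∫ t in (0:ℝ)..1, ⟪gradient g (x + t • v), v⟫
      = g (x + (1:ℝ) • v) - g (x + (0:ℝ) • v) :=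
    intervalIntegral.integral_eq_sub_of_hasDerivAt (fun t _ => hder t)
      (hcont.intervalIntegrable 0 1)
  have hbound : ∀ t ∈ Set.Icc (0:ℝ) 1,
      ⟪gradient g (x + t • v), v⟫ ≤ ⟪gradient g x, v⟫ + L * ‖v‖ ^ 2 * t := by
    intro t ht
    have h1 : ⟪gradient g (x + t • v) - gradient g x, v⟫ ≤ L * ‖v‖ ^ 2 * t := by
      calc ⟪gradient g (x + t • v) - gradient g x, v⟫
          ≤ ‖gradient g (x + t • v) - gradient g x‖ * ‖v‖ := real_inner_le_norm _ _
        _ ≤ (L * ‖x + t • v - x‖) * ‖v‖ :=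
            mul_le_mul_of_nonneg_right (hlip _ _) (norm_nonneg _)
        _ = L * ‖v‖ ^ 2 * t := by
            rw [add_sub_cancel_left, norm_smul, Real.norm_eq_abs, abs_of_nonneg ht.1]
            ring
    have h2 : ⟪gradient g (x + t • v) - gradient g x, v⟫
        = ⟪gradient g (x + t • v), v⟫ - ⟪gradient g x, v⟫ := inner_sub_left _ _ _
    linarith
  have hint : ∫ t in (0:ℝ)..1, ⟪gradient g (x + t • v), v⟫
      ≤ ∫ t in (0:ℝ)..1, (⟪gradient g x, v⟫ + L * ‖v‖ ^ 2 * t) := by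
    apply intervalIntegral.integral_mono_on zero_le_one (hcont.intervalIntegrable 0 1)
      (((continuous_const.add (continuous_const.mul continuous_id)) :
        Continuous fun t : ℝ => ⟪gradient g x, v⟫ + L * ‖v‖ ^ 2 * t).intervalIntegrable 0 1)
      hbound
  have hval : ∫ t in (0:ℝ)..1, (⟪gradient g x, v⟫ + L * ‖v‖ ^ 2 * t)
      = ⟪gradient g x, v⟫ + L * ‖v‖ ^ 2 / 2 := by
    rw [intervalIntegral.integral_add (g := fun t : ℝ => L * ‖v‖ ^ 2 * t) intervalIntegrable_const
      (((continuous_const.mul continuous_id) :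
        Continuous fun t : ℝ => L * ‖v‖ ^ 2 * t).intervalIntegrable 0 1)]
    rw [intervalIntegral.integral_const_mul, integral_id, intervalIntegral.integral_const]
    simp
    ring
  have hpts : g (x + (1:ℝ) • v) - g (x + (0:ℝ) • v) = g y - g x := by
    have : x + (1:ℝ) • v = y := by rw [hv]; simp
    rw [this]; simp
  rw [hFTC, hpts] at hint
  linarith [hint, hval.le, hval.ge]

lemma red_aux_strong {g : F → ℝ} (hconv : ConvexOn ℝ Set.univ g)
    (hg : Differentiable ℝ g) {L : ℝ} (hL : 0 < L)
    (hlip : ∀ a b, ‖gradient g a - gradient g b‖ ≤ L * ‖a - b‖) (x y : F) :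
    g x + ⟪gradient g x, y - x⟫ + 1 / (2 * L) * ‖gradient g y - gradient g x‖ ^ 2 ≤ g y := by
  set u := gradient g y - gradient g x with hu
  set z := y - (1 / L) • u with hz
  have h1 : g x + ⟪gradient g x, z - x⟫ ≤ g z := red_aux_convex_ineq hconv hg x z
  have h2 : g z ≤ g y + ⟪gradient g y, z - y⟫ + L / 2 * ‖z - y‖ ^ 2 :=
    red_aux_descent hg hL hlip y z
  have hzy : z - y = -((1 / L) • u) := by rw [hz]; abel
  have e1 : ⟪gradient g y, z - y⟫ = -(1 / L) * ⟪gradient g y, u⟫ := by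
    rw [hzy, inner_neg_right, real_inner_smul_right]; ring
  have e2 : ‖z - y‖ ^ 2 = (1 / L) ^ 2 * ‖u‖ ^ 2 := by
    rw [hzy, norm_neg, norm_smul, mul_pow, Real.norm_eq_abs, sq_abs]
  have e3 : ⟪gradient g x, z - x⟫ = ⟪gradient g x, y - x⟫ - (1 / L) * ⟪gradient g x, u⟫ := by
    have : z - x = (y - x) - (1 / L) • u := by rw [hz]; abel
    rw [this, inner_sub_right, real_inner_smul_right]
  have e4 : ⟪gradient g y, u⟫ - ⟪gradient g x, u⟫ = ‖u‖ ^ 2 := by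
    rw [← inner_sub_left, ← hu, real_inner_self_eq_norm_sq]
  have hL' : L ≠ 0 := hL.ne'
  rw [e1, e2] at h2
  rw [e3] at h1
  have harith : L / 2 * ((1 / L) ^ 2 * ‖u‖ ^ 2) = 1 / (2 * L) * ‖u‖ ^ 2 := by
    field_simp
  have harith2 : (1 / L) * ⟪gradient g y, u⟫ - (1 / L) * ⟪gradient g x, u⟫
      = (1 / L) * ‖u‖ ^ 2 := by rw [← mul_sub, e4]
  have hfin : 1 / (2 * L) * ‖u‖ ^ 2 = (1 / L) * ‖u‖ ^ 2 - 1 / (2 * L) * ‖u‖ ^ 2 := by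
    field_simp; ring
  linarith [h1, h2, harith, harith2, hfin]


lemma red_aux_coco {g : F → ℝ} (hconv : ConvexOn ℝ Set.univ g)
    (hg : Differentiable ℝ g) {L : ℝ} (hL : 0 < L)
    (hlip : ∀ a b, ‖gradient g a - gradient g b‖ ≤ L * ‖a - b‖) (x y : F) :
    (1 / L) * ‖gradient g x - gradient g y‖ ^ 2 ≤ ⟪gradient g x - gradient g y, x - y⟫ := by
  have h1 := red_aux_strong hconv hg hL hlip x y
  have h2 := red_aux_strong hconv hg hL hlip y x
  have hn : ‖gradient g x - gradient g y‖ = ‖gradient g y - gradient g x‖ := by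
    rw [← norm_neg]; congr 1; abel
  have e1 : ⟪gradient g x - gradient g y, x - y⟫
      = ⟪gradient g x, x - y⟫ - ⟪gradient g y, x - y⟫ := inner_sub_left _ _ _
  have e2 : ⟪gradient g x, y - x⟫ = -⟪gradient g x, x - y⟫ := by
    rw [← inner_neg_right]; congr 1; abel
  have e3 : ⟪gradient g y, x - y⟫ = -⟪gradient g y, y - x⟫ := by
    rw [← inner_neg_right]; congr 1; abel
  have hL2 : 1 / L = 1 / (2 * L) + 1 / (2 * L) := by field_simp; ring
  have hsplit : 1 / L * ‖gradient g y - gradient g x‖ ^ 2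
      = 1 / (2 * L) * ‖gradient g y - gradient g x‖ ^ 2
        + 1 / (2 * L) * ‖gradient g y - gradient g x‖ ^ 2 := by
    field_simp; ring
  rw [hn] at h2 ⊢
  linarith [h1, h2, e1, e2, e3, hsplit]

end RedAux

/-- For the RED operator `G = ∇g + τ(Id − D)` with `g` convex, differentiable with
`L`-Lipschitz gradient and `D` nonexpansive, the map `Id − γG` is nonexpansive for any
step size `0 < γ ≤ 2/(L+2τ)`. -/
theorem red_step_nonexpansive
    {n : ℕ} (L τ : ℝ) (hL : 0 < L) (hτ : 0 < τ)
    (g : EuclideanSpace ℝ (Fin n) → ℝ)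
    (hg_conv : ConvexOn ℝ Set.univ g)
    (hg_diff : Differentiable ℝ g)
    (hg_lip : ∀ x y, ‖gradient g x - gradient g y‖ ≤ L * ‖x - y‖)
    (D : EuclideanSpace ℝ (Fin n) → EuclideanSpace ℝ (Fin n))
    (hD : ∀ x y, ‖D x - D y‖ ≤ ‖x - y‖)
    (G : EuclideanSpace ℝ (Fin n) → EuclideanSpace ℝ (Fin n))
    (hG : ∀ x, G x = gradient g x + τ • (x - D x)) :
    ∀ γ : ℝ, 0 < γ → γ ≤ 2 / (L + 2 * τ) →
      ∀ x y, ‖(x - γ • G x) - (y - γ • G y)‖ ≤ ‖x - y‖ := by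
  intro γ hγ hγle x y
  have hLτ : 0 < L + 2 * τ := by linarith
  have key : γ * (L + 2 * τ) ≤ 2 := by
    rw [le_div_iff₀ hLτ] at hγle; exact hγle
  have hγτ : γ * τ < 1 := by nlinarith
  set u := gradient g x - gradient g y with hu
  set v := x - y with hv
  set w := D x - D y with hw
  have hcoco : (1 / L) * ‖u‖ ^ 2 ≤ ⟪u, v⟫ :=
    red_aux_coco hg_conv hg_diff hL hg_lip x y
  have hcoco' : ‖u‖ ^ 2 ≤ L * ⟪u, v⟫ := by
    rw [one_div, inv_mul_le_iff₀ hL] at hcoco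
    linarith [hcoco]
  have hinn : (0:ℝ) ≤ ⟪u, v⟫ := by nlinarith [sq_nonneg ‖u‖]
  have hwv : ‖w‖ ≤ ‖v‖ := hD x y
  have hrw : (x - γ • G x) - (y - γ • G y)
      = ((1 - γ * τ) • v - γ • u) + (γ * τ) • w := by
    rw [hG x, hG y, hu, hv, hw]
    module
  have hpos : (0:ℝ) ≤ 1 - γ * τ := by linarith
  have h1 : ‖(1 - γ * τ) • v - γ • u‖ ≤ (1 - γ * τ) * ‖v‖ := by
    have hsq : ‖(1 - γ * τ) • v - γ • u‖ ^ 2 ≤ ((1 - γ * τ) * ‖v‖) ^ 2 := by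
      rw [norm_sub_sq_real, norm_smul, norm_smul, real_inner_smul_left,
        real_inner_smul_right, Real.norm_eq_abs, Real.norm_eq_abs,
        abs_of_nonneg hpos, abs_of_nonneg hγ.le, real_inner_comm]
      nlinarith [hcoco', key, hγ.le, hinn, sq_nonneg ‖u‖,
        mul_nonneg hγ.le hinn, mul_nonneg (mul_nonneg hγ.le hγ.le) hinn]
    nlinarith [hsq, norm_nonneg ((1 - γ * τ) • v - γ • u),
      mul_nonneg hpos (norm_nonneg v)]
  calc ‖(x - γ • G x) - (y - γ • G y)‖
      = ‖((1 - γ * τ) • v - γ • u) + (γ * τ) • w‖ := by rw [hrw]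
    _ ≤ ‖(1 - γ * τ) • v - γ • u‖ + ‖(γ * τ) • w‖ := norm_add_le _ _
    _ ≤ (1 - γ * τ) * ‖v‖ + (γ * τ) * ‖v‖ := by
        have h2 : ‖(γ * τ) • w‖ = (γ * τ) * ‖w‖ := by
          rw [norm_smul, Real.norm_eq_abs, abs_of_nonneg (by positivity)]
        rw [h2]
        have := mul_le_mul_of_nonneg_left hwv (by positivity : (0:ℝ) ≤ γ * τ)
        linarith
    _ = ‖v‖ := by ring
end

section
/- Let L, τ > 0 and let G : ℝⁿ → ℝⁿ be 1/(L+2τ)-cocoercive with G(x*) = 0 for some x* ∈ ℝⁿ. Let γ > 0, b ≥ 1, λ ∈ ℕ, let x̃ ∈ ℝⁿ, let m ≤ λ, let v₁, …, v_m ∈ ℝⁿ, and set x := x̃ − γ∑_{s=1}^{m} v_s. Then (2γ/b)·⟨G(x̃), x* − x⟩ ≤ ((L+2τ)λγ² − 2γ)/((L+2τ)b)·‖G(x̃)‖² + (γ²/b)·∑_{s=1}^{m} ‖v_s‖². -/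
open scoped RealInnerProductSpace

/-- Bound on the cross term for a stale iterate: if `G` is `1/(L+2τ)`-cocoercive with
`G(x*) = 0` and `x = x̃ − γ ∑ₛ vₛ` with at most `λ` delayed updates, then
`(2γ/b)⟨G(x̃), x* − x⟩ ≤ ((L+2τ)λγ² − 2γ)/((L+2τ)b)‖G(x̃)‖² + (γ²/b)∑ₛ‖vₛ‖²`. -/
theorem stale_cross_term_bound
    {n : ℕ} (L τ γ : ℝ) (hL : 0 < L) (hτ : 0 < τ) (hγ : 0 < γ)
    (b : ℕ) (hb : 1 ≤ b) (lam m : ℕ) (hm : m ≤ lam)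
    (G : EuclideanSpace ℝ (Fin n) → EuclideanSpace ℝ (Fin n))
    (hG_coco : ∀ u v, (1 / (L + 2 * τ)) * ‖G u - G v‖ ^ 2 ≤ ⟪G u - G v, u - v⟫)
    (xstar : EuclideanSpace ℝ (Fin n)) (hxstar : G xstar = 0)
    (xt : EuclideanSpace ℝ (Fin n)) (v : Fin m → EuclideanSpace ℝ (Fin n))
    (x : EuclideanSpace ℝ (Fin n)) (hx : x = xt - γ • ∑ s, v s) :
    (2 * γ / b) * ⟪G xt, xstar - x⟫ ≤
      ((L + 2 * τ) * lam * γ ^ 2 - 2 * γ) / ((L + 2 * τ) * b) * ‖G xt‖ ^ 2 +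
        (γ ^ 2 / b) * ∑ s, ‖v s‖ ^ 2 := by
  have hc : 0 < L + 2 * τ := by linarith
  have hb' : (1 : ℝ) ≤ (b : ℝ) := by exact_mod_cast hb
  have hbpos : (0 : ℝ) < (b : ℝ) := by linarith
  set g := G xt with hg
  set G2 := ‖g‖ ^ 2 with hG2
  set S := ∑ s, ‖v s‖ ^ 2 with hS
  have hG2nn : 0 ≤ G2 := sq_nonneg _
  have hSnn : 0 ≤ S := Finset.sum_nonneg fun s _ => sq_nonneg _
  have h1 : ⟪g, xstar - xt⟫ ≤ -(1 / (L + 2 * τ)) * G2 := by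
    have hco := hG_coco xt xstar
    rw [hxstar, sub_zero] at hco
    have he : ⟪g, xstar - xt⟫ = -⟪g, xt - xstar⟫ := by
      rw [← inner_neg_right]; congr 1; abel
    have hco' : 1 / (L + 2 * τ) * G2 ≤ ⟪g, xt - xstar⟫ := hco
    rw [he]
    linarith
  have h2 : ∀ s, ⟪g, v s⟫ ≤ G2 / 2 + ‖v s‖ ^ 2 / 2 := by
    intro s
    have hcs := real_inner_le_norm g (v s)
    nlinarith [sq_nonneg (‖g‖ - ‖v s‖)]
  have hsum : ⟪g, ∑ s, v s⟫ ≤ (m : ℝ) * (G2 / 2) + S / 2 := by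
    rw [inner_sum]
    calc ∑ s, ⟪g, v s⟫ ≤ ∑ s : Fin m, (G2 / 2 + ‖v s‖ ^ 2 / 2) :=
          Finset.sum_le_sum fun s _ => h2 s
      _ = (m : ℝ) * (G2 / 2) + S / 2 := by
          rw [Finset.sum_add_distrib, Finset.sum_const, Finset.card_univ, hS,
            Finset.sum_div]
          simp [nsmul_eq_mul]
  have hexp : ⟪g, xstar - x⟫ = ⟪g, xstar - xt⟫ + γ * ⟪g, ∑ s, v s⟫ := by
    rw [hx]
    have hrw : xstar - (xt - γ • ∑ s, v s) = (xstar - xt) + γ • ∑ s, v s := by abel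
    rw [hrw, inner_add_right, real_inner_smul_right]
  have hm' : (m : ℝ) ≤ (lam : ℝ) := by exact_mod_cast hm
  rw [hexp]
  have hstep : ⟪g, xstar - xt⟫ + γ * ⟪g, ∑ s, v s⟫ ≤
      -(1 / (L + 2 * τ)) * G2 + γ * ((lam : ℝ) * (G2 / 2) + S / 2) := by
    have : γ * ⟪g, ∑ s, v s⟫ ≤ γ * ((lam : ℝ) * (G2 / 2) + S / 2) := by
      apply mul_le_mul_of_nonneg_left _ hγ.le
      calc ⟪g, ∑ s, v s⟫ ≤ (m : ℝ) * (G2 / 2) + S / 2 := hsum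
        _ ≤ (lam : ℝ) * (G2 / 2) + S / 2 := by nlinarith
    linarith
  calc (2 * γ / (b : ℝ)) * (⟪g, xstar - xt⟫ + γ * ⟪g, ∑ s, v s⟫)
      ≤ (2 * γ / (b : ℝ)) * (-(1 / (L + 2 * τ)) * G2 + γ * ((lam : ℝ) * (G2 / 2) + S / 2)) := by
        apply mul_le_mul_of_nonneg_left hstep
        positivity
    _ = ((L + 2 * τ) * (lam : ℝ) * γ ^ 2 - 2 * γ) / ((L + 2 * τ) * (b : ℝ)) * G2 +
        (γ ^ 2 / (b : ℝ)) * S := by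
        field_simp
        ring
end
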